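/- arXiv:2009.09342 — 5 statements merged into one kernel-verified Lean document; each statement's English description precedes it below -/
import Mathlib

section
/- For real α and β > 0, the two-sided sum ∑_{n=−∞}^∞ πn·exp(−π²n²/(2β))·sin(πnα) equals 2·(β^{3/2}/√(2π))·∑_{n=−∞}^∞ exp(−(β/2)(2n+α)²)·(α+2n). -/
/-! The series on the left is a multiple of the odd theta series `∑ n sin(2π a n) e^{-π n² t}` at
`a = α / 2`, `t = π / (2β)`, and the one on the right of `∑ (n + a) e^{-π (n + a)² / t}`. These two
are exchanged by the Jacobi transformation `t ↦ 1 / t`, which Mathlib records as the functional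
equation relating `HurwitzZeta.sinKernel` and `HurwitzZeta.oddKernel`; it only remains to compare
the constants. -/

open Real

lemma Real.rpow_three_halves_eq_mul_sqrt {x : ℝ} (hx : 0 ≤ x) : x ^ (3 / 2 : ℝ) = x * √x := by
  rw [show (3 / 2 : ℝ) = 1 + 1 / 2 by norm_num, rpow_add' hx (by norm_num), rpow_one, sqrt_eq_rpow]

namespace HurwitzZeta

lemma hasSum_int_sinKernel_real (a : ℝ) {t : ℝ} (ht : 0 < t) :
    HasSum (fun n : ℤ ↦ n * Real.sin (2 * π * a * n) * rexp (-π * n ^ 2 * t)) (sinKernel a t) := by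
  refine (Complex.hasSum_re (hasSum_int_sinKernel a ht)).congr_fun fun n ↦ ?_
  have harg : 2 * (π : ℂ) * Complex.I * a * n = ((2 * π * a * n : ℝ) : ℂ) * Complex.I := by
    push_cast; ring
  rw [harg, Complex.exp_mul_I, ← Complex.ofReal_cos, ← Complex.ofReal_sin]
  simp only [Complex.mul_re, Complex.mul_im, Complex.neg_re, Complex.neg_im, Complex.add_re,
    Complex.add_im, Complex.ofReal_re, Complex.ofReal_im, Complex.I_re, Complex.I_im,
    Complex.intCast_re, Complex.intCast_im]
  ring

lemma rpow_three_halves_mul_tsum_int_mul_sin_mul_exp (a : ℝ) {t : ℝ} (ht : 0 < t) :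
    t ^ (3 / 2 : ℝ) * ∑' n : ℤ, n * Real.sin (2 * π * a * n) * rexp (-π * n ^ 2 * t)
      = ∑' n : ℤ, (n + a) * rexp (-π * (n + a) ^ 2 / t) := by
  have hodd := oddKernel_functional_equation a (1 / t)
  rw [one_div_one_div, Real.div_rpow zero_le_one ht.le, Real.one_rpow, one_div_one_div] at hodd
  have hsum : HasSum (fun n : ℤ ↦ (n + a) * rexp (-π * (n + a) ^ 2 / t)) (oddKernel a (1 / t)) := by
    simpa only [mul_one_div] using hasSum_int_oddKernel a (one_div_pos.2 ht)
  rw [(hasSum_int_sinKernel_real a ht).tsum_eq, hsum.tsum_eq, hodd]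

end HurwitzZeta

open HurwitzZeta in
theorem stmt_5 (α β : ℝ) (hβ : 0 < β) :
    ∑' n : ℤ, π * n * Real.exp (-π ^ 2 * n ^ 2 / (2 * β)) * Real.sin (π * n * α)
      = 2 * (β ^ ((3 : ℝ) / 2) / Real.sqrt (2 * π))
          * ∑' n : ℤ, Real.exp (-(β / 2) * (2 * n + α) ^ 2) * (α + 2 * n) := by
  have ht : 0 < π / (2 * β) := by positivity
  have hconst : π = 2 * (β ^ ((3 : ℝ) / 2) / √(2 * π)) * 2 * (π / (2 * β)) ^ ((3 : ℝ) / 2) := by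
    rw [rpow_three_halves_eq_mul_sqrt hβ.le, rpow_three_halves_eq_mul_sqrt ht.le,
      sqrt_div pi_pos.le, sqrt_mul zero_le_two, sqrt_mul zero_le_two]
    have : 0 < √π := sqrt_pos.2 pi_pos
    have : 0 < √β := sqrt_pos.2 hβ
    field_simp
    norm_num
  set S := ∑' n : ℤ, n * Real.sin (2 * π * (α / 2) * n) * rexp (-π * n ^ 2 * (π / (2 * β)))
  calc _ = π * S := by
        rw [← tsum_mul_left]
        congr 1 with n
        field_simp
    _ = 2 * (β ^ ((3 : ℝ) / 2) / √(2 * π))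
          * (2 * ∑' n : ℤ, (n + α / 2) * rexp (-π * (n + α / 2) ^ 2 / (π / (2 * β)))) := by
        rw [← rpow_three_halves_mul_tsum_int_mul_sin_mul_exp (α / 2) ht]
        linear_combination S * hconst
    _ = _ := by
        rw [← tsum_mul_left]
        congr 2 with n
        field_simp
        ring_nf
end

section
/- Let l > 0, τ > s, and ξ, x be real. Then (1/(2l))·∑_{n∈ℤ} exp(−π²n²(τ−s)/l²)·cos(πn(x−ξ)/l) = (1/(2√(π(τ−s))))·∑_{n∈ℤ} exp(−(x−ξ+2nl)²/(4(τ−s))). -/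
/-!
Both sides are the two expressions of Jacobi's theta transformation (Poisson summation for the
Gaussian): with `a = π (τ - s) / l²` and `c = (x - ξ) / (2 l)`, the cosine sum on the left is the
real part of `∑ exp (-π a n² + 2 π i c n)`, whose Fourier-dual side is
`a^(-1/2) ∑ exp (-π (n + c)² / a)`, the sum of images of the heat kernel on the right.
-/

open Real Complex

lemma Complex.summable_exp_neg_quadratic {a : ℂ} (ha : 0 < a.re) (b : ℂ) :
    Summable fun n : ℤ => cexp (-π * a * n ^ 2 + 2 * π * b * n) := by
  refine ((summable_jacobiTheta₂_term_iff (-I * b) (a * I)).mpr (by simpa using ha)).congr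
    fun n => ?_
  rw [jacobiTheta₂_term]
  ring_nf
  rw [I_sq]
  ring_nf

theorem Real.tsum_exp_neg_mul_int_sq_mul_cos {a : ℝ} (ha : 0 < a) (c : ℝ) :
    ∑' n : ℤ, rexp (-π * a * n ^ 2) * Real.cos (2 * π * c * n) =
      1 / √a * ∑' n : ℤ, rexp (-π / a * (n + c) ^ 2) := by
  have ha' : 0 < (a : ℂ).re := by simpa using ha
  have key := congrArg re (Complex.tsum_exp_neg_quadratic ha' (I * c))
  have hpow : (a : ℂ) ^ (1 / 2 : ℂ) = (√a : ℂ) := by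
    rw [sqrt_eq_rpow, ofReal_cpow ha.le]
    norm_num
  have hdual : ∀ n : ℤ, cexp (-π / a * (n + I * (I * c)) ^ 2) =
      rexp (-π / a * ((-n : ℤ) + c) ^ 2) := fun n => by
    rw [ofReal_exp, ← mul_assoc, I_mul_I]
    push_cast
    ring_nf
  rw [re_tsum (Complex.summable_exp_neg_quadratic ha' _), tsum_congr hdual, hpow,
    ← ofReal_tsum, ← ofReal_one, ← ofReal_div, ← ofReal_mul, ofReal_re] at key
  have hneg := (Equiv.neg ℤ).tsum_eq fun n : ℤ => rexp (-π / a * (n + c) ^ 2)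
  refine Eq.trans (tsum_congr fun n => ?_) (key.trans (congrArg (1 / √a * ·) hneg))
  simp [exp_re, sq]

theorem stmt_6 (l τ s x ξ : ℝ) (hl : 0 < l) (hτs : s < τ) :
    (1 / (2 * l)) * ∑' n : ℤ,
        Real.exp (-π ^ 2 * n ^ 2 * (τ - s) / l ^ 2) * Real.cos (π * n * (x - ξ) / l)
      = (1 / (2 * Real.sqrt (π * (τ - s)))) * ∑' n : ℤ,
          Real.exp (-(x - ξ + 2 * n * l) ^ 2 / (4 * (τ - s))) := by
  have ht : 0 < τ - s := sub_pos.mpr hτs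
  have h := Real.tsum_exp_neg_mul_int_sq_mul_cos (a := π * (τ - s) / l ^ 2) (by positivity)
    ((x - ξ) / (2 * l))
  have hcos : ∀ n : ℤ, rexp (-π * (π * (τ - s) / l ^ 2) * n ^ 2) *
      Real.cos (2 * π * ((x - ξ) / (2 * l)) * n) =
      rexp (-π ^ 2 * n ^ 2 * (τ - s) / l ^ 2) * Real.cos (π * n * (x - ξ) / l) := fun n => by
    congr 2 <;> field_simp
  have himages : ∀ n : ℤ, rexp (-π / (π * (τ - s) / l ^ 2) * (n + (x - ξ) / (2 * l)) ^ 2) =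
      rexp (-(x - ξ + 2 * n * l) ^ 2 / (4 * (τ - s))) := fun n => by
    congr 1
    field_simp
    ring
  have hsqrt : √(π * (τ - s) / l ^ 2) = √(π * (τ - s)) / l := by
    rw [sqrt_div' _ (sq_nonneg l), sqrt_sq hl.le]
  rw [tsum_congr hcos, tsum_congr himages, hsqrt] at h
  rw [h]
  field_simp
end

section
/- Let l > 0, τ > s, and ξ, x be real. Then (1/(2l))·∑_{n∈ℤ} exp(−π²n²(τ−s)/l²)·(πn/l)·sin(πn(x−ξ)/l) = (1/(4√(π(τ−s)³)))·∑_{n∈ℤ} (x−ξ+2nl)·exp(−(x−ξ+2nl)²/(4(τ−s))). -/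
/-!
With `z = (x - ξ) / (2l)` and `y = π(τ - s)/l²`, both sides are multiples of the `z`-derivative of
the Jacobi theta function at `(z, iy)`. The left side is its Fourier series, made real by pairing
`n` with `-n` (the derivative is odd in `z`); the right side is what the modular transformation
`τ ↦ -1/τ` (`jacobiTheta₂'_functional_equation`, i.e. Poisson summation for a Gaussian) turns it into.
-/

open Real Complex

lemma jacobiTheta₂'_term_sub_neg_left_ofReal (n : ℤ) (z y : ℝ) :
    jacobiTheta₂'_term n z (y * I) - jacobiTheta₂'_term n (-z) (y * I)
      = ((-4 * π * n * rexp (-π * n ^ 2 * y) * Real.sin (2 * π * n * z) : ℝ) : ℂ) := by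
  have h (w : ℝ) : jacobiTheta₂'_term n w (y * I)
      = 2 * π * I * n * cexp (-π * n ^ 2 * y) * cexp ((2 * π * n * w : ℝ) * I) := by
    rw [jacobiTheta₂'_term, jacobiTheta₂_term, mul_assoc _ (cexp _), ← Complex.exp_add]
    congr 2
    push_cast
    linear_combination (π * n ^ 2 * y : ℂ) * I_sq
  rw [h, ← ofReal_neg z, h, exp_mul_I, exp_mul_I]
  push_cast
  rw [mul_neg, Complex.cos_neg, Complex.sin_neg]
  linear_combination (4 * π * n * cexp (-π * n ^ 2 * y) * Complex.sin (2 * π * n * z)) * I_sq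

lemma jacobiTheta₂'_ofReal_mul_I (z : ℝ) {y : ℝ} (hy : 0 < y) :
    jacobiTheta₂' z (y * I)
      = ((-2 * π * ∑' n : ℤ, n * rexp (-π * n ^ 2 * y) * Real.sin (2 * π * n * z) : ℝ) : ℂ) := by
  have hτ : 0 < (y * I : ℂ).im := by simpa using hy
  have hdiff := (hasSum_jacobiTheta₂'_term (z : ℂ) hτ).sub (hasSum_jacobiTheta₂'_term (-z : ℂ) hτ)
  simp only [jacobiTheta₂'_term_sub_neg_left_ofReal, jacobiTheta₂'_neg_left, sub_neg_eq_add,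
    mul_assoc (-4 * π)] at hdiff
  have := hdiff.tsum_eq
  rw [← ofReal_tsum, tsum_mul_left] at this
  push_cast at this ⊢
  linear_combination (-1 / 2 : ℂ) * this

lemma jacobiTheta₂'_sub_mul_jacobiTheta₂ (z w : ℂ) {τ : ℂ} (hτ : 0 < im τ) :
    jacobiTheta₂' w τ - 2 * π * I * z * jacobiTheta₂ w τ
      = ∑' n : ℤ, 2 * π * I * (n - z) * jacobiTheta₂_term n w τ := by
  rw [jacobiTheta₂', jacobiTheta₂, ← tsum_mul_left, ← Summable.tsum_sub
    (hasSum_jacobiTheta₂'_term w hτ).summable ((hasSum_jacobiTheta₂_term w hτ).summable.mul_left _)]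
  congr 1 with n
  rw [jacobiTheta₂'_term]
  ring

lemma cexp_mul_jacobiTheta₂_term_div_mul_I (n : ℤ) (z y : ℝ) :
    cexp (-π * I * z ^ 2 / (y * I)) * jacobiTheta₂_term n (z / (y * I)) (-1 / (y * I))
      = rexp (-π * (n - z) ^ 2 / y) := by
  rw [jacobiTheta₂_term, ← Complex.exp_add, ofReal_exp]
  congr 1
  push_cast
  field_simp
  ring

lemma tsum_mul_exp_neg_sq_mul_sin (z : ℝ) {y : ℝ} (hy : 0 < y) :
    ∑' n : ℤ, n * rexp (-π * n ^ 2 * y) * Real.sin (2 * π * n * z)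
      = (y * √y)⁻¹ * ∑' n : ℤ, (z + n) * rexp (-π * (z + n) ^ 2 / y) := by
  have hτ' : 0 < (-1 / (y * I) : ℂ).im := by
    simp [div_eq_mul_inv, hy]
  have hsqrt : (-I * (y * I)) ^ (1 / 2 : ℂ) = (√y : ℂ) := by
    rw [show -I * (y * I) = y by linear_combination (-y : ℂ) * I_sq, Real.sqrt_eq_rpow,
      ofReal_cpow hy.le]
    norm_num
  have hreindex : ∑' n : ℤ, (n - z) * rexp (-π * (n - z) ^ 2 / y)
      = -∑' n : ℤ, (z + n) * rexp (-π * (z + n) ^ 2 / y) := by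
    rw [← tsum_comp_neg, ← tsum_neg]
    congr 1 with n
    push_cast
    ring_nf
  have hsum : cexp (-π * I * z ^ 2 / (y * I)) * ∑' n : ℤ,
        2 * π * I * (n - z) * jacobiTheta₂_term n (z / (y * I)) (-1 / (y * I))
      = 2 * π * I * ((∑' n : ℤ, (n - z) * rexp (-π * (n - z) ^ 2 / y) : ℝ) : ℂ) := by
    rw [← tsum_mul_left, ofReal_tsum, ← tsum_mul_left]
    congr 1 with n
    rw [mul_left_comm, cexp_mul_jacobiTheta₂_term_div_mul_I n z y]
    push_cast
    ring
  have hfe := jacobiTheta₂'_functional_equation z (y * I)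
  rw [jacobiTheta₂'_ofReal_mul_I z hy, jacobiTheta₂'_sub_mul_jacobiTheta₂ _ _ hτ', hsqrt,
    mul_div_right_comm, mul_assoc _ (cexp _), hsum, hreindex] at hfe
  generalize (∑' n : ℤ, n * rexp (-π * n ^ 2 * y) * Real.sin (2 * π * n * z)) = S at hfe ⊢
  generalize (∑' n : ℤ, (z + n) * rexp (-π * (z + n) ^ 2 / y)) = R at hfe ⊢
  apply ofReal_injective
  push_cast at hfe ⊢
  field_simp at hfe ⊢
  linear_combination -hfe

theorem stmt_7 (l τ s x ξ : ℝ) (hl : 0 < l) (hτs : s < τ) :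
    (1 / (2 * l)) * ∑' n : ℤ,
        Real.exp (-π ^ 2 * n ^ 2 * (τ - s) / l ^ 2) * (π * n / l) * Real.sin (π * n * (x - ξ) / l)
      = (1 / (4 * Real.sqrt (π * (τ - s) ^ 3))) * ∑' n : ℤ,
          (x - ξ + 2 * n * l) * Real.exp (-(x - ξ + 2 * n * l) ^ 2 / (4 * (τ - s))) := by
  set t := τ - s
  have ht : 0 < t := sub_pos.2 hτs
  set z := (x - ξ) / (2 * l) with hz_def
  set y := π * t / l ^ 2 with hy_def
  have hlhs : ∑' n : ℤ,
        rexp (-π ^ 2 * n ^ 2 * t / l ^ 2) * (π * n / l) * Real.sin (π * n * (x - ξ) / l)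
      = π / l * ∑' n : ℤ, n * rexp (-π * n ^ 2 * y) * Real.sin (2 * π * n * z) := by
    rw [← tsum_mul_left]
    congr 1 with n
    rw [hy_def, hz_def]
    ring_nf
  have hrhs : ∑' n : ℤ, (x - ξ + 2 * n * l) * rexp (-(x - ξ + 2 * n * l) ^ 2 / (4 * t))
      = 2 * l * ∑' n : ℤ, (z + n) * rexp (-π * (z + n) ^ 2 / y) := by
    rw [← tsum_mul_left]
    congr 1 with n
    rw [hy_def, hz_def]
    field_simp
    ring_nf
  have hsqrt : √y = √(π * t) / l := by
    rw [Real.sqrt_div' _ (sq_nonneg l), Real.sqrt_sq hl.le]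
  have hsqrt3 : √(π * t ^ 3) = t * √(π * t) := by
    rw [show π * t ^ 3 = t ^ 2 * (π * t) by ring, Real.sqrt_mul (sq_nonneg t), Real.sqrt_sq ht.le]
  rw [hlhs, hrhs, tsum_mul_exp_neg_sq_mul_sin z (by positivity), hsqrt, hsqrt3, hy_def]
  generalize ∑' n : ℤ, (z + n) * rexp (-π * (z + n) ^ 2 / y) = R
  field_simp
  ring
end

section
/- Let l > 0 and x ∈ ℝ with 0 < x − y < 2l for a fixed real y (so x ≠ y mod 2l). Then limit as s → τ⁻ of ∑_{n∈ℤ, n≠0} [−(x − y + 2nl)/(2√(π(τ−s)³))]·exp(−(x − y + 2nl)²/(4(τ−s))) = 0. -/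
open Real Filter Topology

/-!
With `ε = τ - s` and `a = x - y + 2nl`, the bound `exp (-u) ≤ 3! / u³` gives
`|a| / (2√(πε³)) · exp (-a² / 4ε) ≤ 192 ε^{3/2} / |a|⁵`. Since `0 < x - y < 2l`, every shift
satisfies `|a| ≥ (2l - (x - y)) |n|`, so the whole series is bounded by `ε^{3/2}` times a
convergent multiple of `∑ 1 / |n|⁵`, which tends to `0` as `s → τ⁻`.
-/

lemma Real.exp_neg_le_six_div_pow_three {u : ℝ} (hu : 0 < u) : exp (-u) ≤ 6 / u ^ 3 := by
  have h := Real.pow_div_factorial_le_exp u hu.le 3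
  rw [exp_neg, inv_le_comm₀ (exp_pos u) (by positivity), inv_div]
  simpa [Nat.factorial] using h

lemma abs_neg_div_sqrt_mul_exp_le {a ε b : ℝ} (hε : 0 < ε) (hb : 0 < b) (hab : b ≤ |a|) :
    |-a / (2 * √(π * ε ^ 3)) * exp (-a ^ 2 / (4 * ε))| ≤ 192 * √(ε ^ 3) / b ^ 5 := by
  have ha : 0 < |a| := hb.trans_le hab
  have ha2 : 0 < a ^ 2 := by rw [← sq_abs]; positivity
  have hr2 : √(ε ^ 3) ^ 2 = ε ^ 3 := sq_sqrt (by positivity)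
  have hπ : √(ε ^ 3) ≤ √(π * ε ^ 3) :=
    sqrt_le_sqrt (le_mul_of_one_le_left (by positivity) (by linarith [pi_gt_three]))
  calc |-a / (2 * √(π * ε ^ 3)) * exp (-a ^ 2 / (4 * ε))|
      = |a| / (2 * √(π * ε ^ 3)) * exp (-(a ^ 2 / (4 * ε))) := by
        rw [abs_mul, abs_div, abs_neg, abs_of_pos (exp_pos _), neg_div,
          abs_of_pos (by positivity : 0 < 2 * √(π * ε ^ 3))]
    _ ≤ |a| / (2 * √(ε ^ 3)) * (6 / (a ^ 2 / (4 * ε)) ^ 3) := by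
        gcongr
        exact exp_neg_le_six_div_pow_three (by positivity)
    _ = 192 * √(ε ^ 3) / |a| ^ 5 := by
        rw [← sq_abs a]
        field_simp
        rw [hr2]
        ring
    _ ≤ 192 * √(ε ^ 3) / b ^ 5 := by gcongr

lemma mul_abs_int_le_abs_add {c l : ℝ} (hc : 0 ≤ c) (n : ℤ) :
    (2 * l - c) * |(n : ℝ)| ≤ |c + 2 * n * l| := by
  rcases le_or_gt 0 n with hn | hn
  · have hn' : (0 : ℝ) ≤ n := by exact_mod_cast hn
    rw [abs_of_nonneg hn']
    calc (2 * l - c) * n ≤ c + 2 * n * l := by nlinarith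
      _ ≤ _ := le_abs_self _
  · have hn' : (n : ℝ) ≤ -1 := by exact_mod_cast Int.le_sub_one_of_lt hn
    rw [abs_of_neg (by linarith)]
    calc (2 * l - c) * -n ≤ -(c + 2 * n * l) := by nlinarith
      _ ≤ _ := neg_le_abs _

lemma summable_one_div_abs_int_pow_ne_zero {p : ℕ} (hp : 1 < p) :
    Summable fun n : {n : ℤ // n ≠ 0} => 1 / |(n : ℝ)| ^ p := by
  have h := (summable_one_div_int_pow.mpr hp).abs.comp_injective
    (Subtype.val_injective (p := fun n : ℤ => n ≠ 0))
  simpa [Function.comp_def] using h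

lemma tendsto_tsum_of_norm_le_mul {α ι E : Type*} [SeminormedAddCommGroup E] {L : Filter α}
    {f : α → ι → E} {g : α → ℝ} {w : ι → ℝ} (hw : Summable w) (hg : Tendsto g L (𝓝 0))
    (hf : ∀ᶠ s in L, ∀ i, ‖f s i‖ ≤ g s * w i) :
    Tendsto (fun s => ∑' i, f s i) L (𝓝 0) := by
  refine squeeze_zero_norm' ?_ (by simpa using hg.mul_const (∑' i, w i))
  filter_upwards [hf] with s hs
  exact tsum_of_norm_bounded (hw.hasSum.mul_left (g s)) hs

theorem stmt_17_general (l y x τ : ℝ) (h1 : 0 < x - y) (h2 : x - y < 2 * l) :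
    Tendsto (fun s : ℝ => ∑' n : {n : ℤ // n ≠ 0},
        -(x - y + 2 * (n : ℤ) * l) / (2 * Real.sqrt (π * (τ - s) ^ 3))
          * Real.exp (-(x - y + 2 * (n : ℤ) * l) ^ 2 / (4 * (τ - s))))
      (nhdsWithin τ (Set.Iio τ)) (nhds 0) := by
  set δ := 2 * l - (x - y)
  have hδ : 0 < δ := by linarith
  refine tendsto_tsum_of_norm_le_mul (g := fun s => √((τ - s) ^ 3))
    ((summable_one_div_abs_int_pow_ne_zero (p := 5) (by norm_num)).mul_left (192 / δ ^ 5)) ?_ ?_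
  · have hg : ContinuousAt (fun s => √((τ - s) ^ 3)) τ := by fun_prop
    simpa using hg.tendsto.mono_left nhdsWithin_le_nhds
  · filter_upwards [self_mem_nhdsWithin] with s (hs : s < τ) n
    have hn : 0 < |((n : ℤ) : ℝ)| := abs_pos.mpr (Int.cast_ne_zero.mpr n.2)
    calc _ ≤ 192 * √((τ - s) ^ 3) / (δ * |((n : ℤ) : ℝ)|) ^ 5 :=
          abs_neg_div_sqrt_mul_exp_le (sub_pos.mpr hs) (by positivity)
            (mul_abs_int_le_abs_add h1.le n)
      _ = √((τ - s) ^ 3) * (192 / δ ^ 5 * (1 / |((n : ℤ) : ℝ)| ^ 5)) := by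
          field_simp

theorem stmt_17 (l y x τ : ℝ) (hl : 0 < l) (h1 : 0 < x - y) (h2 : x - y < 2 * l) :
    Tendsto (fun s : ℝ => ∑' n : {n : ℤ // n ≠ 0},
        -(x - y + 2 * (n : ℤ) * l) / (2 * Real.sqrt (π * (τ - s) ^ 3))
          * Real.exp (-(x - y + 2 * (n : ℤ) * l) ^ 2 / (4 * (τ - s))))
      (nhdsWithin τ (Set.Iio τ)) (nhds 0) :=
  stmt_17_general l y x τ h1 h2
end

section
/- For σ > 0 and c ∈ ℝ, the function q(τ, x) = ∫_0^τ Ω(k)·(x − c)/(4σ³√(π(τ−k)³))·exp(−(x−c)²/(4σ²(τ−k))) dk, with Ω continuous and y(k) ≡ c constant, satisfies the heat equation ∂q/∂τ = σ²·∂²q/∂x² for all x ≠ c and τ > 0. -/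
/-!
The integrand is `Ω k * K (x - c) (τ - k)`, where `K = -∂_z Φ` for the heat kernel `Φ` of
`∂_s = σ² ∂_z²`, so `K` solves the same equation. For `z ≠ 0`, `K z s` and all its derivatives are
sums of terms `p z * exp (-b / s) / s ^ (m / 2)` with `b = z² / (4σ²) > 0`, which vanish to infinite
order as `s → 0⁺`; extended by zero to `s ≤ 0` they stay differentiable. Since `K` vanishes for
`s ≤ 0`, the upper limit `τ` of the time integral can be frozen at `τ + 1`, and both sides of the equation are obtained by
differentiating under the integral sign, the derivatives being bounded in `s` locally uniformly
in `z ≠ 0` because `exp (-b / s) / s ^ (m / 2)` is bounded uniformly for `b` bounded away from `0`.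
-/

open Real MeasureTheory Filter Topology Nat

/-- For `s ≤ 0` the junk value `√s = 0` makes `gaussPow b m s` vanish: this is the extension of
the heat kernel by zero to negative times. -/
noncomputable def gaussPow (b : ℝ) (m : ℕ) (s : ℝ) : ℝ := exp (-b / s) / √s ^ m

section gaussPow

variable {b : ℝ} {m : ℕ}

lemma gaussPow_nonneg (b : ℝ) (m : ℕ) (s : ℝ) : 0 ≤ gaussPow b m s := by
  unfold gaussPow; positivity

lemma gaussPow_of_nonpos (b : ℝ) (hm : m ≠ 0) {s : ℝ} (hs : s ≤ 0) : gaussPow b m s = 0 := by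
  simp [gaussPow, sqrt_eq_zero'.mpr hs, hm]

lemma gaussPow_le_mul_sqrt_pow (hb : 0 < b) (hm : m ≠ 0) (s : ℝ) :
    gaussPow b m s ≤ (m + 1)! / b ^ (m + 1) * √s ^ (m + 2) := by
  rcases le_or_gt s 0 with hs | hs
  · rw [gaussPow_of_nonpos b hm hs]
    positivity
  have hr : 0 < √s := sqrt_pos.mpr hs
  have hexp : exp (-b / s) ≤ (m + 1)! * s ^ (m + 1) / b ^ (m + 1) := by
    have h := Real.pow_div_factorial_le_exp _ (div_pos hb hs).le (m + 1)
    rw [neg_div, exp_neg, ← one_div]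
    calc 1 / exp (b / s) ≤ 1 / ((b / s) ^ (m + 1) / (m + 1)!) :=
          one_div_le_one_div_of_le (by positivity) h
      _ = (m + 1)! * s ^ (m + 1) / b ^ (m + 1) := by rw [div_pow]; field_simp
  calc gaussPow b m s ≤ (m + 1)! * s ^ (m + 1) / b ^ (m + 1) / √s ^ m :=
        div_le_div_of_nonneg_right hexp (by positivity)
    _ = (m + 1)! / b ^ (m + 1) * √s ^ (m + 2) := by
        rw [show s ^ (m + 1) = √s ^ (2 * (m + 1)) by rw [pow_mul, sq_sqrt hs.le]]
        field_simp
        ring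

lemma exists_gaussPow_le {b₀ : ℝ} (hb₀ : 0 < b₀) (hm : m ≠ 0) :
    ∃ C, ∀ b, b₀ ≤ b → ∀ s, gaussPow b m s ≤ C := by
  refine ⟨max 1 ((m + 1)! / b₀ ^ (m + 1)), fun b hb s => ?_⟩
  rcases le_or_gt s 1 with hs | hs
  · calc gaussPow b m s ≤ (m + 1)! / b ^ (m + 1) * √s ^ (m + 2) :=
          gaussPow_le_mul_sqrt_pow (hb₀.trans_le hb) hm s
      _ ≤ (m + 1)! / b₀ ^ (m + 1) * 1 := by
          gcongr
          exact pow_le_one₀ (sqrt_nonneg s) (sqrt_le_one.mpr hs)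
      _ ≤ _ := by rw [mul_one]; exact le_max_right _ _
  · have hexp : exp (-b / s) ≤ 1 := exp_le_one_iff.mpr
      (div_nonpos_of_nonpos_of_nonneg (by linarith) (by linarith))
    have hpow : 1 ≤ √s ^ m := one_le_pow₀ (one_le_sqrt.mpr hs.le)
    calc gaussPow b m s ≤ 1 := (div_le_one (by linarith)).mpr (hexp.trans hpow)
      _ ≤ _ := le_max_left _ _

lemma tendsto_gaussPow_nhds_zero (hb : 0 < b) (hm : m ≠ 0) :
    Tendsto (gaussPow b m) (𝓝 0) (𝓝 0) := by
  refine squeeze_zero (gaussPow_nonneg b m) (gaussPow_le_mul_sqrt_pow hb hm) ?_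
  have h : Continuous fun s => (m + 1)! / b ^ (m + 1) * √s ^ (m + 2) := by fun_prop
  simpa using h.tendsto 0


lemma gaussPow_eq_mul_gaussPow_add_two (b : ℝ) (hm : m ≠ 0) (s : ℝ) :
    gaussPow b m s = s * gaussPow b (m + 2) s := by
  rcases le_or_gt s 0 with hs | hs
  · rw [gaussPow_of_nonpos b hm hs, gaussPow_of_nonpos b (by omega) hs, mul_zero]
  · have hr : 0 < √s := sqrt_pos.mpr hs
    simp only [gaussPow]
    rw [pow_add, sq_sqrt hs.le]
    field_simp

lemma hasDerivAt_gaussPow (hb : 0 < b) (hm : m ≠ 0) (s : ℝ) :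
    HasDerivAt (gaussPow b m) (b * gaussPow b (m + 4) s - m / 2 * gaussPow b (m + 2) s) s := by
  rcases lt_trichotomy s 0 with hs | rfl | hs
  · rw [gaussPow_of_nonpos b (by omega) hs.le, gaussPow_of_nonpos b (by omega) hs.le]
    refine (hasDerivAt_const s (0 : ℝ)).congr_of_eventuallyEq ?_ |>.congr_deriv (by ring)
    filter_upwards [Iio_mem_nhds hs] with t ht
    exact gaussPow_of_nonpos b hm (le_of_lt ht)
  · rw [gaussPow_of_nonpos b (by omega) le_rfl, gaussPow_of_nonpos b (by omega) le_rfl,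
      mul_zero, mul_zero, sub_zero, hasDerivAt_iff_tendsto_slope]
    -- the slope at `0` is `gaussPow b (m + 2)`, which tends to `0`
    refine ((tendsto_gaussPow_nhds_zero (m := m + 2) hb (by omega)).mono_left
      nhdsWithin_le_nhds).congr' ?_
    filter_upwards [self_mem_nhdsWithin] with t ht
    rw [slope_def_field, gaussPow_of_nonpos b hm le_rfl, sub_zero, sub_zero,
      gaussPow_eq_mul_gaussPow_add_two b hm, mul_div_cancel_left₀ _ ht]
  · have hr : 0 < √s := sqrt_pos.mpr hs
    have hexp : HasDerivAt (fun t => exp (-b / t)) (exp (-b / s) * (b / s ^ 2)) s := by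
      have h := ((hasDerivAt_inv hs.ne').const_mul (-b)).exp
      simp only [← div_eq_mul_inv] at h
      convert h using 1
      ring
    have hpow : HasDerivAt (fun t => √t ^ m) (m * √s ^ (m - 1) * (1 / (2 * √s))) s :=
      (hasDerivAt_sqrt hs.ne').pow m
    refine (hexp.div hpow (pow_ne_zero _ hr.ne')).congr_deriv ?_
    obtain ⟨n, rfl⟩ := Nat.exists_eq_succ_of_ne_zero hm
    have hs4 : s ^ 2 = √s ^ 4 := by rw [show 4 = 2 * 2 from rfl, pow_mul, sq_sqrt hs.le]
    simp only [gaussPow, Nat.succ_sub_one, Nat.succ_eq_add_one, hs4]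
    field_simp
    ring

lemma hasDerivAt_gaussPow_scale (hm : m ≠ 0) (b s : ℝ) :
    HasDerivAt (fun b => gaussPow b m s) (-gaussPow b (m + 2) s) b := by
  rcases le_or_gt s 0 with hs | hs
  · simp only [gaussPow_of_nonpos _ hm hs, gaussPow_of_nonpos _ (by omega : m + 2 ≠ 0) hs, neg_zero]
    exact hasDerivAt_const b 0
  · have hr : 0 < √s := sqrt_pos.mpr hs
    refine (((hasDerivAt_id b).neg.div_const s).exp.div_const (√s ^ m)).congr_deriv ?_
    simp only [gaussPow, pow_add, sq_sqrt hs.le, Pi.neg_apply, id, neg_div]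
    field_simp

lemma continuous_gaussPow (hb : 0 < b) (hm : m ≠ 0) : Continuous (gaussPow b m) :=
  continuous_iff_continuousAt.mpr fun s => (hasDerivAt_gaussPow hb hm s).continuousAt

lemma exists_eventually_abs_mul_gaussPow_le {p β : ℝ → ℝ} {z₀ : ℝ} (hp : ContinuousAt p z₀)
    (hβ : ContinuousAt β z₀) (hβ₀ : 0 < β z₀) (hm : m ≠ 0) :
    ∃ C, ∀ᶠ z in 𝓝 z₀, ∀ s, |p z * gaussPow (β z) m s| ≤ C := by
  obtain ⟨C, hC⟩ := exists_gaussPow_le (half_pos hβ₀) hm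
  refine ⟨(|p z₀| + 1) * C, ?_⟩
  filter_upwards [hβ.eventually (lt_mem_nhds (half_lt_self hβ₀)),
    hp.abs.eventually (gt_mem_nhds (lt_add_one |p z₀|))] with z hβz hpz s
  rw [abs_mul, abs_of_nonneg (gaussPow_nonneg _ _ _)]
  exact mul_le_mul hpz.le (hC _ hβz.le s) (gaussPow_nonneg _ _ _) (by positivity)

lemma exists_eventually_abs_sub_mul_gaussPow_le {p₁ p₂ β : ℝ → ℝ} {z₀ : ℝ} {m₁ m₂ : ℕ}
    (hp₁ : ContinuousAt p₁ z₀) (hp₂ : ContinuousAt p₂ z₀) (hβ : ContinuousAt β z₀)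
    (hβ₀ : 0 < β z₀) (hm₁ : m₁ ≠ 0) (hm₂ : m₂ ≠ 0) :
    ∃ C, ∀ᶠ z in 𝓝 z₀, ∀ s, |p₁ z * gaussPow (β z) m₁ s - p₂ z * gaussPow (β z) m₂ s| ≤ C := by
  obtain ⟨C₁, h₁⟩ := exists_eventually_abs_mul_gaussPow_le hp₁ hβ hβ₀ hm₁
  obtain ⟨C₂, h₂⟩ := exists_eventually_abs_mul_gaussPow_le hp₂ hβ hβ₀ hm₂
  refine ⟨C₁ + C₂, ?_⟩
  filter_upwards [h₁, h₂] with z hz₁ hz₂ s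
  exact (abs_sub _ _).trans (add_le_add (hz₁ s) (hz₂ s))

end gaussPow

/-- `-∂_z` of the heat kernel `exp (-z ^ 2 / (4 * σ ^ 2 * s)) / (2 * σ * √(π * s))` of
`∂_s = σ ^ 2 ∂_z ^ 2`, i.e. the kernel of the double-layer heat potential. -/
noncomputable def doubleLayerKernel (σ z s : ℝ) : ℝ :=
  z / (4 * σ ^ 3 * √(π * s ^ 3)) * exp (-z ^ 2 / (4 * σ ^ 2 * s))

noncomputable def doubleLayerKernelDz (σ z s : ℝ) : ℝ :=
  (4 * σ ^ 3 * √π)⁻¹ * gaussPow (z ^ 2 / (4 * σ ^ 2)) 3 s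
    - z ^ 2 / (8 * σ ^ 5 * √π) * gaussPow (z ^ 2 / (4 * σ ^ 2)) 5 s

noncomputable def doubleLayerKernelDzz (σ z s : ℝ) : ℝ :=
  z ^ 3 / (16 * σ ^ 7 * √π) * gaussPow (z ^ 2 / (4 * σ ^ 2)) 7 s
    - 3 * z / (8 * σ ^ 5 * √π) * gaussPow (z ^ 2 / (4 * σ ^ 2)) 5 s

section doubleLayerKernel

variable {σ : ℝ}

lemma doubleLayerKernel_eq (σ z s : ℝ) :
    doubleLayerKernel σ z s = (4 * σ ^ 3 * √π)⁻¹ * z * gaussPow (z ^ 2 / (4 * σ ^ 2)) 3 s := by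
  rcases le_or_gt s 0 with hs | hs
  · have h : √(π * s ^ 3) = 0 := sqrt_eq_zero'.mpr (mul_nonpos_of_nonneg_of_nonpos pi_pos.le
      (Odd.pow_nonpos (by decide) hs))
    simp [doubleLayerKernel, h, gaussPow_of_nonpos _ three_ne_zero hs]
  · have hsqrt : √(π * s ^ 3) = √π * √s ^ 3 := by
      rw [sqrt_mul pi_pos.le, show s ^ 3 = (√s ^ 3) ^ 2 by
        rw [← pow_mul, mul_comm, pow_mul, sq_sqrt hs.le], sqrt_sq (by positivity)]
    rw [doubleLayerKernel, gaussPow, hsqrt, neg_div, neg_div, div_div]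
    ring

lemma doubleLayerKernel_of_nonpos (σ z : ℝ) {s : ℝ} (hs : s ≤ 0) : doubleLayerKernel σ z s = 0 := by
  rw [doubleLayerKernel_eq, gaussPow_of_nonpos _ three_ne_zero hs, mul_zero]

lemma continuous_doubleLayerKernel (hσ : σ ≠ 0) (z : ℝ) : Continuous (doubleLayerKernel σ z) := by
  rcases eq_or_ne z 0 with rfl | hz
  · rw [show doubleLayerKernel σ 0 = fun _ => 0 from funext fun s => by simp [doubleLayerKernel]]
    exact continuous_const
  · have hb : 0 < z ^ 2 / (4 * σ ^ 2) := by positivity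
    simp only [funext (doubleLayerKernel_eq σ z)]
    exact continuous_const.mul (continuous_gaussPow hb three_ne_zero)

lemma continuous_doubleLayerKernelDz (hσ : σ ≠ 0) {z : ℝ} (hz : z ≠ 0) :
    Continuous (doubleLayerKernelDz σ z) := by
  have hb : 0 < z ^ 2 / (4 * σ ^ 2) := by positivity
  unfold doubleLayerKernelDz
  exact (continuous_const.mul (continuous_gaussPow hb (by norm_num))).sub
    (continuous_const.mul (continuous_gaussPow hb (by norm_num)))

lemma continuous_doubleLayerKernelDzz (hσ : σ ≠ 0) {z : ℝ} (hz : z ≠ 0) :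
    Continuous (doubleLayerKernelDzz σ z) := by
  have hb : 0 < z ^ 2 / (4 * σ ^ 2) := by positivity
  unfold doubleLayerKernelDzz
  exact (continuous_const.mul (continuous_gaussPow hb (by norm_num))).sub
    (continuous_const.mul (continuous_gaussPow hb (by norm_num)))

lemma hasDerivAt_doubleLayerKernel_time (hσ : σ ≠ 0) {z : ℝ} (hz : z ≠ 0) (s : ℝ) :
    HasDerivAt (doubleLayerKernel σ z) (σ ^ 2 * doubleLayerKernelDzz σ z s) s := by
  have hb : 0 < z ^ 2 / (4 * σ ^ 2) := by positivity
  simp only [funext (doubleLayerKernel_eq σ z)]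
  refine ((hasDerivAt_gaussPow hb three_ne_zero s).const_mul _).congr_deriv ?_
  simp only [doubleLayerKernelDzz, Nat.reduceAdd, Nat.cast_ofNat]
  field_simp
  ring

lemma hasDerivAt_doubleLayerKernel_space (σ z s : ℝ) :
    HasDerivAt (fun z => doubleLayerKernel σ z s) (doubleLayerKernelDz σ z s) z := by
  simp only [doubleLayerKernel_eq]
  have hb : HasDerivAt (fun z => z ^ 2 / (4 * σ ^ 2)) (2 * z / (4 * σ ^ 2)) z := by
    simpa using (hasDerivAt_pow 2 z).div_const (4 * σ ^ 2)
  have hg := (hasDerivAt_gaussPow_scale three_ne_zero _ s).comp z hb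
  refine (((hasDerivAt_id z).const_mul _).mul hg).congr_deriv ?_
  simp only [doubleLayerKernelDz, Function.comp_def, id]
  ring

lemma hasDerivAt_doubleLayerKernelDz (σ z s : ℝ) :
    HasDerivAt (fun z => doubleLayerKernelDz σ z s) (doubleLayerKernelDzz σ z s) z := by
  have hb : HasDerivAt (fun z => z ^ 2 / (4 * σ ^ 2)) (2 * z / (4 * σ ^ 2)) z := by
    simpa using (hasDerivAt_pow 2 z).div_const (4 * σ ^ 2)
  have hg3 := (hasDerivAt_gaussPow_scale three_ne_zero _ s).comp z hb
  have hg5 := (hasDerivAt_gaussPow_scale (by norm_num : 5 ≠ 0) _ s).comp z hb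
  have hp : HasDerivAt (fun z => z ^ 2 / (8 * σ ^ 5 * √π)) (2 * z / (8 * σ ^ 5 * √π)) z := by
    simpa using (hasDerivAt_pow 2 z).div_const (8 * σ ^ 5 * √π)
  refine ((hg3.const_mul _).sub (hp.mul hg5)).congr_deriv ?_
  simp only [doubleLayerKernelDzz, Function.comp_def]
  rcases eq_or_ne σ 0 with rfl | hσ
  · simp
  · field_simp
    ring

lemma exists_eventually_abs_doubleLayerKernelDz_le (hσ : σ ≠ 0) {z₀ : ℝ} (hz₀ : z₀ ≠ 0) :
    ∃ C, ∀ᶠ z in 𝓝 z₀, ∀ s, |doubleLayerKernelDz σ z s| ≤ C := by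
  unfold doubleLayerKernelDz
  exact exists_eventually_abs_sub_mul_gaussPow_le (by fun_prop) (by fun_prop) (by fun_prop)
    (by positivity) three_ne_zero (by norm_num)

lemma exists_eventually_abs_doubleLayerKernelDzz_le (hσ : σ ≠ 0) {z₀ : ℝ} (hz₀ : z₀ ≠ 0) :
    ∃ C, ∀ᶠ z in 𝓝 z₀, ∀ s, |doubleLayerKernelDzz σ z s| ≤ C := by
  unfold doubleLayerKernelDzz
  exact exists_eventually_abs_sub_mul_gaussPow_le (by fun_prop) (by fun_prop) (by fun_prop)
    (by positivity) (by norm_num) (by norm_num)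

end doubleLayerKernel

lemma hasDerivAt_integral_mul_of_eventually_abs_le {Ω : ℝ → ℝ} (hΩ : Continuous Ω)
    {g g' : ℝ → ℝ → ℝ} {a b x₀ C : ℝ} (hg : ∀ᶠ x in 𝓝 x₀, Continuous (g x))
    (hg' : Continuous (g' x₀)) (hderiv : ∀ᶠ x in 𝓝 x₀, ∀ k, HasDerivAt (g · k) (g' x k) x)
    (hbound : ∀ᶠ x in 𝓝 x₀, ∀ k, |g' x k| ≤ C) :
    HasDerivAt (fun x => ∫ k in a..b, Ω k * g x k) (∫ k in a..b, Ω k * g' x₀ k) x₀ := by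
  obtain ⟨M, hM⟩ := (isCompact_uIcc (a := a) (b := b)).exists_bound_of_continuousOn hΩ.continuousOn
  refine (intervalIntegral.hasDerivAt_integral_of_dominated_loc_of_deriv_le
    (bound := fun _ => M * C) (hderiv.and hbound)
    (hg.mono fun x hx => (hΩ.mul hx).aestronglyMeasurable)
    ((hΩ.mul hg.self_of_nhds).intervalIntegrable _ _) (hΩ.mul hg').aestronglyMeasurable
    (ae_of_all _ fun k hk x hx => ?_) intervalIntegrable_const
    (ae_of_all _ fun k _ x hx => (hx.1 k).const_mul (Ω k))).2
  have hMk := hM k (Set.uIoc_subset_uIcc hk)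
  rw [norm_mul]
  exact mul_le_mul hMk (hx.2 k) (abs_nonneg _) ((norm_nonneg _).trans hMk)

section doubleLayerPotential

variable {σ : ℝ} {Ω : ℝ → ℝ}

lemma integral_mul_doubleLayerKernel_eq_of_le (hσ : σ ≠ 0) (hΩ : Continuous Ω) (a z : ℝ)
    {t T : ℝ} (htT : t ≤ T) :
    ∫ k in a..t, Ω k * doubleLayerKernel σ z (t - k)
      = ∫ k in a..T, Ω k * doubleLayerKernel σ z (t - k) := by
  have hcont : Continuous fun k => Ω k * doubleLayerKernel σ z (t - k) :=
    hΩ.mul ((continuous_doubleLayerKernel hσ z).comp (continuous_sub_left t))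
  have hzero : ∫ k in t..T, Ω k * doubleLayerKernel σ z (t - k) = 0 := by
    rw [← intervalIntegral.integral_zero]
    refine intervalIntegral.integral_congr fun k hk => ?_
    rw [Set.uIcc_of_le htT] at hk
    simp [doubleLayerKernel_of_nonpos σ z (sub_nonpos.mpr hk.1)]
  rw [← intervalIntegral.integral_add_adjacent_intervals (hcont.intervalIntegrable a t)
    (hcont.intervalIntegrable t T), hzero, add_zero]

lemma hasDerivAt_integral_mul_doubleLayerKernel_time (hσ : σ ≠ 0) (hΩ : Continuous Ω)
    (a b : ℝ) {z : ℝ} (hz : z ≠ 0) (τ : ℝ) :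
    HasDerivAt (fun t => ∫ k in a..b, Ω k * doubleLayerKernel σ z (t - k))
      (σ ^ 2 * ∫ k in a..b, Ω k * doubleLayerKernelDzz σ z (τ - k)) τ := by
  obtain ⟨C, hC⟩ := exists_eventually_abs_doubleLayerKernelDzz_le hσ hz
  have h := hasDerivAt_integral_mul_of_eventually_abs_le hΩ (a := a) (b := b) (x₀ := τ)
    (g := fun t k => doubleLayerKernel σ z (t - k))
    (g' := fun t k => σ ^ 2 * doubleLayerKernelDzz σ z (t - k)) (C := σ ^ 2 * C)
    (.of_forall fun t => (continuous_doubleLayerKernel hσ z).comp (continuous_sub_left t))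
    (continuous_const.mul ((continuous_doubleLayerKernelDzz hσ hz).comp (continuous_sub_left τ)))
    (.of_forall fun t k => (hasDerivAt_doubleLayerKernel_time hσ hz (t - k)).comp_sub_const t k)
    (.of_forall fun t k => by
      rw [abs_mul, abs_sq]
      exact mul_le_mul_of_nonneg_left (hC.self_of_nhds (t - k)) (sq_nonneg σ))
  refine h.congr_deriv ?_
  rw [← intervalIntegral.integral_const_mul]
  simp only [mul_left_comm]

lemma hasDerivAt_deriv_integral_mul_doubleLayerKernel (hσ : σ ≠ 0) (hΩ : Continuous Ω)
    (a b t : ℝ) {z₀ : ℝ} (hz₀ : z₀ ≠ 0) :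
    HasDerivAt (deriv fun z => ∫ k in a..b, Ω k * doubleLayerKernel σ z (t - k))
      (∫ k in a..b, Ω k * doubleLayerKernelDzz σ z₀ (t - k)) z₀ := by
  obtain ⟨C₁, hC₁⟩ := exists_eventually_abs_doubleLayerKernelDz_le hσ hz₀
  obtain ⟨C₂, hC₂⟩ := exists_eventually_abs_doubleLayerKernelDzz_le hσ hz₀
  have hne : ∀ᶠ z in 𝓝 z₀, z ≠ 0 := eventually_ne_nhds hz₀
  have hDz : ∀ᶠ z in 𝓝 z₀, HasDerivAt (fun z => ∫ k in a..b, Ω k * doubleLayerKernel σ z (t - k))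
      (∫ k in a..b, Ω k * doubleLayerKernelDz σ z (t - k)) z := by
    filter_upwards [hne, hC₁.eventually_nhds] with z hz hCz
    exact hasDerivAt_integral_mul_of_eventually_abs_le hΩ
      (.of_forall fun z => (continuous_doubleLayerKernel hσ z).comp (continuous_sub_left t))
      ((continuous_doubleLayerKernelDz hσ hz).comp (continuous_sub_left t))
      (.of_forall fun z k => hasDerivAt_doubleLayerKernel_space σ z (t - k))
      (hCz.mono fun z hz k => hz (t - k))
  refine (hasDerivAt_integral_mul_of_eventually_abs_le hΩ ?_
    ((continuous_doubleLayerKernelDzz hσ hz₀).comp (continuous_sub_left t))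
    (.of_forall fun z k => hasDerivAt_doubleLayerKernelDz σ z (t - k))
    (hC₂.mono fun z hz k => hz (t - k))).congr_of_eventuallyEq (hDz.mono fun z hz => hz.deriv)
  filter_upwards [hne] with z hz
  exact (continuous_doubleLayerKernelDz hσ hz).comp (continuous_sub_left t)

end doubleLayerPotential

theorem stmt_18 (σ c : ℝ) (hσ : 0 < σ) (Ω : ℝ → ℝ) (hΩ : Continuous Ω)
    (q : ℝ → ℝ → ℝ)
    (hq : ∀ τ x, q τ x = ∫ k in (0:ℝ)..τ,
        Ω k * (x - c) / (4 * σ ^ 3 * Real.sqrt (π * (τ - k) ^ 3))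
          * Real.exp (-(x - c) ^ 2 / (4 * σ ^ 2 * (τ - k)))) :
    ∀ τ x, 0 < τ → x ≠ c →
      deriv (fun τ' => q τ' x) τ = σ ^ 2 * deriv (deriv (fun x' => q τ x')) x := by
  intro τ x _ hx
  set u : ℝ → ℝ → ℝ := fun t z => ∫ k in (0:ℝ)..τ + 1, Ω k * doubleLayerKernel σ z (t - k)
  have hqu : ∀ t y, t ≤ τ + 1 → q t y = u t (y - c) := fun t y ht => by
    change _ = ∫ k in (0:ℝ)..τ + 1, Ω k * doubleLayerKernel σ (y - c) (t - k)
    rw [hq, ← integral_mul_doubleLayerKernel_eq_of_le hσ.ne' hΩ 0 (y - c) ht]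
    simp only [doubleLayerKernel, mul_div_assoc, mul_assoc]
  have hz : x - c ≠ 0 := sub_ne_zero.mpr hx
  have htime : deriv (fun t => q t x) τ = σ ^ 2 * ∫ k in (0:ℝ)..τ + 1,
      Ω k * doubleLayerKernelDzz σ (x - c) (τ - k) := by
    refine ((hasDerivAt_integral_mul_doubleLayerKernel_time hσ.ne' hΩ _ _ hz τ)
      |>.congr_of_eventuallyEq ?_).deriv
    filter_upwards [gt_mem_nhds (lt_add_one τ)] with t ht using hqu t x ht.le
  have hspace : deriv (deriv fun y => q τ y) x = ∫ k in (0:ℝ)..τ + 1,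
      Ω k * doubleLayerKernelDzz σ (x - c) (τ - k) := by
    have hderiv : deriv (fun y => q τ y) = fun y => deriv (u τ) (y - c) := funext fun y => by
      simp only [hqu τ _ (lt_add_one τ).le, deriv_comp_sub_const]
    rw [hderiv, deriv_comp_sub_const]
    exact (hasDerivAt_deriv_integral_mul_doubleLayerKernel hσ.ne' hΩ _ _ τ hz).deriv
  rw [htime, hspace]
end
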